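/- arXiv:1005.5634 — 3 statements merged into one kernel-verified Lean document; each statement's English description precedes it below -/
import Mathlib

section
/- With π̃ᵢ the monotone graphs of continuous strictly increasing π₁, π₂ : [0,1] → ℝ, and with the modified graphs π̆ᵢ defined by π̆ᵢ(s) = {πᵢ(s)} for s ∈ (0,1), π̆ᵢ(0) = [min(π₁(0), π₂(0)), πᵢ(0)], π̆ᵢ(1) = [πᵢ(1), max(π₁(1), π₂(1))], one has: for all (s₁, s₂) ∈ [0,1]², π̃₁(s₁) ∩ π̃₂(s₂) ≠ ∅ if and only if π̆₁(s₁) ∩ π̆₂(s₂) ≠ ∅. -/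
open Set

open Classical in
/-- The monotone graph associated to a capillary pressure curve `π`:
`π̃(s) = {π s}` for `s ∈ (0,1)`, `π̃(0) = (-∞, π 0]`, `π̃(1) = [π 1, ∞)`. -/
noncomputable def tildeGraph (π : ℝ → ℝ) (s : ℝ) : Set ℝ :=
  if s = 0 then Set.Iic (π 0) else if s = 1 then Set.Ici (π 1) else {π s}

open Classical in
/-- The modified (bounded) monotone graph `π̆`: `π̆(s) = {π s}` on `(0,1)`,
`π̆(0) = [m, π 0]`, `π̆(1) = [π 1, M]`. -/
noncomputable def breveGraph (π : ℝ → ℝ) (m M : ℝ) (s : ℝ) : Set ℝ :=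
  if s = 0 then Set.Icc m (π 0) else if s = 1 then Set.Icc (π 1) M else {π s}

lemma tildeGraph_zero (π : ℝ → ℝ) : tildeGraph π 0 = Set.Iic (π 0) := by
  simp [tildeGraph]

lemma tildeGraph_one (π : ℝ → ℝ) : tildeGraph π 1 = Set.Ici (π 1) := by
  norm_num [tildeGraph]

lemma tildeGraph_mid (π : ℝ → ℝ) {s : ℝ} (h0 : s ≠ 0) (h1 : s ≠ 1) :
    tildeGraph π s = {π s} := by
  simp [tildeGraph, h0, h1]

lemma breveGraph_zero (π : ℝ → ℝ) (m M : ℝ) : breveGraph π m M 0 = Set.Icc m (π 0) := by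
  simp [breveGraph]

lemma breveGraph_one (π : ℝ → ℝ) (m M : ℝ) : breveGraph π m M 1 = Set.Icc (π 1) M := by
  norm_num [breveGraph]

lemma breveGraph_mid (π : ℝ → ℝ) (m M : ℝ) {s : ℝ} (h0 : s ≠ 0) (h1 : s ≠ 1) :
    breveGraph π m M s = {π s} := by
  simp [breveGraph, h0, h1]

lemma breveGraph_subset_tildeGraph (π : ℝ → ℝ) (m M s : ℝ) :
    breveGraph π m M s ⊆ tildeGraph π s := by
  unfold breveGraph tildeGraph
  split_ifs
  · exact Set.Icc_subset_Iic_self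
  · exact Set.Icc_subset_Ici_self
  · exact subset_rfl

/-- `π̃₁(s₁) ∩ π̃₂(s₂) ≠ ∅ ↔ π̆₁(s₁) ∩ π̆₂(s₂) ≠ ∅`, where `π̆ᵢ` uses the bounds
`m = min(π₁ 0, π₂ 0)` and `M = max(π₁ 1, π₂ 1)`. -/
theorem tildeGraph_iff_breveGraph (π₁ π₂ : ℝ → ℝ)
    (h1c : ContinuousOn π₁ (Set.Icc 0 1)) (h1m : StrictMonoOn π₁ (Set.Icc 0 1))
    (h2c : ContinuousOn π₂ (Set.Icc 0 1)) (h2m : StrictMonoOn π₂ (Set.Icc 0 1)) :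
    ∀ s₁ ∈ Set.Icc (0:ℝ) 1, ∀ s₂ ∈ Set.Icc (0:ℝ) 1,
      ((tildeGraph π₁ s₁ ∩ tildeGraph π₂ s₂).Nonempty ↔
        (breveGraph π₁ (min (π₁ 0) (π₂ 0)) (max (π₁ 1) (π₂ 1)) s₁ ∩
          breveGraph π₂ (min (π₁ 0) (π₂ 0)) (max (π₁ 1) (π₂ 1)) s₂).Nonempty) := by
  intro s₁ hs₁ s₂ hs₂
  obtain ⟨h10, h11⟩ := hs₁
  obtain ⟨h20, h21⟩ := hs₂
  have mem0 : (0:ℝ) ∈ Set.Icc (0:ℝ) 1 := by norm_num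
  have mem1 : (1:ℝ) ∈ Set.Icc (0:ℝ) 1 := by norm_num
  have hms₁ : s₁ ∈ Set.Icc (0:ℝ) 1 := ⟨h10, h11⟩
  have hms₂ : s₂ ∈ Set.Icc (0:ℝ) 1 := ⟨h20, h21⟩
  have p101 : π₁ 0 < π₁ 1 := h1m mem0 mem1 one_pos
  have p201 : π₂ 0 < π₂ 1 := h2m mem0 mem1 one_pos
  have hm1 : min (π₁ 0) (π₂ 0) ≤ π₁ 0 := min_le_left _ _
  have hm2 : min (π₁ 0) (π₂ 0) ≤ π₂ 0 := min_le_right _ _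
  have hM1 : π₁ 1 ≤ max (π₁ 1) (π₂ 1) := le_max_left _ _
  have hM2 : π₂ 1 ≤ max (π₁ 1) (π₂ 1) := le_max_right _ _
  constructor
  swap
  · exact fun h => h.mono (Set.inter_subset_inter
      (breveGraph_subset_tildeGraph _ _ _ _) (breveGraph_subset_tildeGraph _ _ _ _))
  rintro ⟨x, hx1, hx2⟩
  rcases eq_or_ne s₁ 0 with rfl | e1
  · rw [tildeGraph_zero, Set.mem_Iic] at hx1
    rw [breveGraph_zero]
    rcases eq_or_ne s₂ 0 with rfl | e2
    · rw [breveGraph_zero]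
      exact ⟨min (π₁ 0) (π₂ 0), Set.mem_Icc.mpr ⟨le_refl _, hm1⟩,
        Set.mem_Icc.mpr ⟨le_refl _, hm2⟩⟩
    · have A2 : π₂ 0 < π₂ s₂ := h2m mem0 hms₂ (h20.lt_of_ne (Ne.symm e2))
      rcases eq_or_ne s₂ 1 with rfl | f2
      · rw [tildeGraph_one, Set.mem_Ici] at hx2
        rw [breveGraph_one]
        exact ⟨π₂ 1, Set.mem_Icc.mpr ⟨by linarith, by linarith⟩,
          Set.mem_Icc.mpr ⟨le_refl _, hM2⟩⟩
      · rw [tildeGraph_mid _ e2 f2, Set.mem_singleton_iff] at hx2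
        subst hx2
        rw [breveGraph_mid _ _ _ e2 f2]
        exact ⟨π₂ s₂, Set.mem_Icc.mpr ⟨by linarith, hx1⟩, rfl⟩
  · have A1 : π₁ 0 < π₁ s₁ := h1m mem0 hms₁ (h10.lt_of_ne (Ne.symm e1))
    rcases eq_or_ne s₁ 1 with rfl | f1
    · rw [tildeGraph_one, Set.mem_Ici] at hx1
      rw [breveGraph_one]
      rcases eq_or_ne s₂ 0 with rfl | e2
      · rw [tildeGraph_zero, Set.mem_Iic] at hx2
        rw [breveGraph_zero]
        exact ⟨π₁ 1, Set.mem_Icc.mpr ⟨le_refl _, hM1⟩,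
          Set.mem_Icc.mpr ⟨by linarith, by linarith⟩⟩
      · rcases eq_or_ne s₂ 1 with rfl | f2
        · rw [breveGraph_one]
          exact ⟨max (π₁ 1) (π₂ 1), Set.mem_Icc.mpr ⟨hM1, le_refl _⟩,
            Set.mem_Icc.mpr ⟨hM2, le_refl _⟩⟩
        · have B2 : π₂ s₂ < π₂ 1 := h2m hms₂ mem1 (h21.lt_of_ne f2)
          rw [tildeGraph_mid _ e2 f2, Set.mem_singleton_iff] at hx2
          subst hx2
          rw [breveGraph_mid _ _ _ e2 f2]
          exact ⟨π₂ s₂, Set.mem_Icc.mpr ⟨hx1, by linarith⟩, rfl⟩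
    · have B1 : π₁ s₁ < π₁ 1 := h1m hms₁ mem1 (h11.lt_of_ne f1)
      rw [tildeGraph_mid _ e1 f1, Set.mem_singleton_iff] at hx1
      subst hx1
      rw [breveGraph_mid _ _ _ e1 f1]
      rcases eq_or_ne s₂ 0 with rfl | e2
      · rw [tildeGraph_zero, Set.mem_Iic] at hx2
        rw [breveGraph_zero]
        exact ⟨π₁ s₁, rfl, Set.mem_Icc.mpr ⟨by linarith, hx2⟩⟩
      · rcases eq_or_ne s₂ 1 with rfl | f2
        · rw [tildeGraph_one, Set.mem_Ici] at hx2
          rw [breveGraph_one]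
          exact ⟨π₁ s₁, rfl, Set.mem_Icc.mpr ⟨hx2, by linarith⟩⟩
        · rw [tildeGraph_mid _ e2 f2, Set.mem_singleton_iff] at hx2
          rw [breveGraph_mid _ _ _ e2 f2]
          exact ⟨π₁ s₁, rfl, hx2⟩
end

section
/- Let π₁, π₂ : [0,1] → ℝ be continuous strictly increasing, with associated monotone graphs π̃ᵢ (π̃ᵢ(s) = {πᵢ(s)} on (0,1), π̃ᵢ(0) = (-∞, πᵢ(0)], π̃ᵢ(1) = [πᵢ(1), ∞)). Then the transmission relation is monotone in the following sense: if π̃₁(u₁) ∩ π̃₂(u₂) ≠ ∅ and π̃₁(v₁) ∩ π̃₂(v₂) ≠ ∅, then u₁ > v₁ implies u₂ ≥ v₂, and u₁ < v₁ implies u₂ ≤ v₂. -/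
open Set

lemma tildeGraph_lt (π : ℝ → ℝ) (hm : StrictMonoOn π (Set.Icc 0 1))
    {s t x y : ℝ} (hs : s ∈ Set.Icc (0:ℝ) 1) (ht : t ∈ Set.Icc (0:ℝ) 1)
    (hst : s < t) (hx : x ∈ tildeGraph π s) (hy : y ∈ tildeGraph π t) : x < y := by
  unfold tildeGraph at hx hy
  have ht0 : t ≠ 0 := by rintro rfl; exact absurd hst (not_lt.2 hs.1)
  have hs1 : s ≠ 1 := by rintro rfl; exact absurd hst (not_lt.2 ht.2)
  rw [if_neg ht0] at hy
  rw [if_neg hs1] at hx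
  have hπ : π s < π t := hm hs ht hst
  by_cases h0 : s = 0
  · rw [if_pos h0] at hx
    by_cases h1 : t = 1
    · rw [if_pos h1] at hy
      calc x ≤ π 0 := hx
        _ < π t := h0 ▸ hπ
        _ ≤ y := h1 ▸ hy
    · rw [if_neg h1] at hy
      calc x ≤ π 0 := hx
        _ < π t := h0 ▸ hπ
        _ = y := hy.symm
  · rw [if_neg h0] at hx
    by_cases h1 : t = 1
    · rw [if_pos h1] at hy
      calc x = π s := hx
        _ < π t := hπ
        _ ≤ y := h1 ▸ hy
    · rw [if_neg h1] at hy
      calc x = π s := hx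
        _ < π t := hπ
        _ = y := hy.symm

/-- Monotonicity of the transmission relation: if `π̃₁(u₁) ∩ π̃₂(u₂) ≠ ∅` and
`π̃₁(v₁) ∩ π̃₂(v₂) ≠ ∅`, then `u₁ > v₁ → u₂ ≥ v₂` and `u₁ < v₁ → u₂ ≤ v₂`. -/
theorem transmission_monotone (π₁ π₂ : ℝ → ℝ)
    (h1c : ContinuousOn π₁ (Set.Icc 0 1)) (h1m : StrictMonoOn π₁ (Set.Icc 0 1))
    (h2c : ContinuousOn π₂ (Set.Icc 0 1)) (h2m : StrictMonoOn π₂ (Set.Icc 0 1))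
    (u₁ u₂ v₁ v₂ : ℝ)
    (hu₁ : u₁ ∈ Set.Icc (0:ℝ) 1) (hu₂ : u₂ ∈ Set.Icc (0:ℝ) 1)
    (hv₁ : v₁ ∈ Set.Icc (0:ℝ) 1) (hv₂ : v₂ ∈ Set.Icc (0:ℝ) 1)
    (hu : (tildeGraph π₁ u₁ ∩ tildeGraph π₂ u₂).Nonempty)
    (hv : (tildeGraph π₁ v₁ ∩ tildeGraph π₂ v₂).Nonempty) :
    (v₁ < u₁ → v₂ ≤ u₂) ∧ (u₁ < v₁ → u₂ ≤ v₂) := by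
  obtain ⟨p, hp1, hp2⟩ := hu
  obtain ⟨q, hq1, hq2⟩ := hv
  constructor
  · intro h
    by_contra hlt
    push_neg at hlt
    exact absurd (tildeGraph_lt π₁ h1m hv₁ hu₁ h hq1 hp1)
      (not_lt.2 (tildeGraph_lt π₂ h2m hu₂ hv₂ hlt hp2 hq2).le)
  · intro h
    by_contra hlt
    push_neg at hlt
    exact absurd (tildeGraph_lt π₁ h1m hu₁ hv₁ h hp1 hq1)
      (not_lt.2 (tildeGraph_lt π₂ h2m hv₂ hu₂ hlt hq2 hp2).le)
end

section
/- Let π₁, π₂ : [0,1] → ℝ be continuous strictly increasing and let (u₁ₙ), (u₂ₙ) ⊂ [0,1] with πₙ-type approximations: suppose π_{i,n} : [0,1] → ℝ are continuous strictly increasing with π_{1,n}(0) = π_{2,n}(0) → -∞, π_{1,n}(1) = π_{2,n}(1) → +∞, π_{i,n} → πᵢ uniformly on compact subsets of (0,1), π_{1,n}(u_{1,n}) = π_{2,n}(u_{2,n}) for all n, and u_{i,n} → uᵢ ∈ [0,1]. Then π̃₁(u₁) ∩ π̃₂(u₂) ≠ ∅, where π̃ᵢ is the monotone graph of πᵢ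 (π̃ᵢ(s) = {πᵢ(s)} on (0,1), π̃ᵢ(0) = (-∞, πᵢ(0)], π̃ᵢ(1) = [πᵢ(1), ∞)), provided the common values γₙ = π_{1,n}(u_{1,n}) converge in the extended reals ℝ̄. -/
open Set

open Filter Topology

/-!
If `s ∈ (0,1)` lies below the limit saturation `u`, then eventually `s < u_n`, so by
monotonicity `π_n(s) ≤ π_n(u_n)` and in the limit `π(s) ≤ γ`; symmetrically `γ ≤ π(s)` for
`s > u`. Hence `γ = -∞` forces `u = 0` and `γ = +∞` forces `u = 1`, while for finite `γ`
continuity of `π` squeezes `γ` into `π̃(u)`. Since both phases share the limit `γ`, this gives a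
common point of `π̃₁(u₁)` and `π̃₂(u₂)`.
-/

theorem tendsto_apply_of_forall_isCompact {α β ι : Type*} [TopologicalSpace α]
    [UniformSpace β] {F : ι → α → β} {f : α → β} {p : Filter ι} {S : Set α}
    (h : ∀ K ⊆ S, IsCompact K → TendstoUniformlyOn F f p K) {x : α} (hx : x ∈ S) :
    Tendsto (F · x) p (𝓝 (f x)) :=
  (h {x} (singleton_subset_iff.2 hx) isCompact_singleton).tendsto_at rfl

section Continuity

variable {φ : ℝ → ℝ} {a b g : ℝ}

theorem le_apply_of_continuousWithinAt_Ioo_left (hab : a < b)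
    (hc : ContinuousWithinAt φ (Ioo a b) a) (h : ∀ s ∈ Ioo a b, g ≤ φ s) : g ≤ φ a := by
  rw [ContinuousWithinAt, nhdsWithin_Ioo_eq_nhdsGT hab] at hc
  exact ge_of_tendsto hc (eventually_of_mem (Ioo_mem_nhdsGT hab) h)

theorem apply_le_of_continuousWithinAt_Ioo_right (hab : a < b)
    (hc : ContinuousWithinAt φ (Ioo a b) b) (h : ∀ s ∈ Ioo a b, φ s ≤ g) : φ b ≤ g := by
  rw [ContinuousWithinAt, nhdsWithin_Ioo_eq_nhdsLT hab] at hc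
  exact le_of_tendsto hc (eventually_of_mem (Ioo_mem_nhdsLT hab) h)

theorem mem_tildeGraph_of_forall_lt_le (hc : ContinuousOn φ (Icc 0 1)) (ha : a ∈ Icc 0 1)
    (hlt : ∀ s ∈ Ioo 0 1, s < a → φ s ≤ g) (hgt : ∀ s ∈ Ioo 0 1, a < s → g ≤ φ s) :
    g ∈ tildeGraph φ a := by
  have hle (ha1 : a < 1) : g ≤ φ a :=
    le_apply_of_continuousWithinAt_Ioo_left ha1
      ((hc a ha).mono (Ioo_subset_Icc_self.trans (Icc_subset_Icc ha.1 le_rfl)))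
      fun s hs => hgt s ⟨ha.1.trans_lt hs.1, hs.2⟩ hs.1
  have hge (ha0 : 0 < a) : φ a ≤ g :=
    apply_le_of_continuousWithinAt_Ioo_right ha0
      ((hc a ha).mono (Ioo_subset_Icc_self.trans (Icc_subset_Icc le_rfl ha.2)))
      fun s hs => hlt s ⟨hs.1, hs.2.trans_le ha.2⟩ hs.2
  unfold tildeGraph
  split_ifs with h0 h1
  · subst h0; exact hle zero_lt_one
  · subst h1; exact hge zero_lt_one
  · exact le_antisymm (hle (ha.2.lt_of_ne h1)) (hge (ha.1.lt_of_ne' h0))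

end Continuity

section LimitValue

variable {f : ℕ → ℝ → ℝ} {φ : ℝ → ℝ} {u : ℕ → ℝ} {a : ℝ} {γ : EReal}

theorem coe_le_of_tendsto_of_lt (hmono : ∀ n, MonotoneOn (f n) (Icc 0 1))
    (hu : ∀ n, u n ∈ Icc 0 1) (hua : Tendsto u atTop (𝓝 a))
    (hγ : Tendsto (fun n => (f n (u n) : EReal)) atTop (𝓝 γ))
    {s : ℝ} (hs : s ∈ Ioo 0 1) (hlim : Tendsto (f · s) atTop (𝓝 (φ s))) (hsa : s < a) :
    (φ s : EReal) ≤ γ := by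
  refine le_of_tendsto_of_tendsto (continuous_coe_real_ereal.tendsto _ |>.comp hlim) hγ ?_
  filter_upwards [hua.eventually_const_lt hsa] with n hn
  exact EReal.coe_le_coe_iff.2 <| hmono n (Ioo_subset_Icc_self hs) (hu n) hn.le

theorem le_coe_of_tendsto_of_lt (hmono : ∀ n, MonotoneOn (f n) (Icc 0 1))
    (hu : ∀ n, u n ∈ Icc 0 1) (hua : Tendsto u atTop (𝓝 a))
    (hγ : Tendsto (fun n => (f n (u n) : EReal)) atTop (𝓝 γ))
    {s : ℝ} (hs : s ∈ Ioo 0 1) (hlim : Tendsto (f · s) atTop (𝓝 (φ s))) (has : a < s) :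
    γ ≤ φ s := by
  refine le_of_tendsto_of_tendsto hγ (continuous_coe_real_ereal.tendsto _ |>.comp hlim) ?_
  filter_upwards [hua.eventually_lt_const has] with n hn
  exact EReal.coe_le_coe_iff.2 <| hmono n (hu n) (Ioo_subset_Icc_self hs) hn.le

theorem eq_zero_of_tendsto_bot (hmono : ∀ n, MonotoneOn (f n) (Icc 0 1))
    (hlim : ∀ s ∈ Ioo 0 1, Tendsto (f · s) atTop (𝓝 (φ s)))
    (hu : ∀ n, u n ∈ Icc 0 1) (hua : Tendsto u atTop (𝓝 a))
    (hγ : Tendsto (fun n => (f n (u n) : EReal)) atTop (𝓝 ⊥)) : a = 0 := by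
  have ha : a ∈ Icc 0 1 := isClosed_Icc.mem_of_tendsto hua (.of_forall hu)
  obtain rfl | ha0 := ha.1.eq_or_lt
  · rfl
  have hs : a / 2 ∈ Ioo 0 1 := ⟨by linarith, by linarith [ha.2]⟩
  have := coe_le_of_tendsto_of_lt hmono hu hua hγ hs (hlim _ hs) (by linarith)
  exact absurd (le_bot_iff.1 this) (EReal.coe_ne_bot _)

theorem eq_one_of_tendsto_top (hmono : ∀ n, MonotoneOn (f n) (Icc 0 1))
    (hlim : ∀ s ∈ Ioo 0 1, Tendsto (f · s) atTop (𝓝 (φ s)))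
    (hu : ∀ n, u n ∈ Icc 0 1) (hua : Tendsto u atTop (𝓝 a))
    (hγ : Tendsto (fun n => (f n (u n) : EReal)) atTop (𝓝 ⊤)) : a = 1 := by
  have ha : a ∈ Icc 0 1 := isClosed_Icc.mem_of_tendsto hua (.of_forall hu)
  obtain rfl | ha1 := ha.2.eq_or_lt
  · rfl
  have hs : (a + 1) / 2 ∈ Ioo 0 1 := ⟨by linarith [ha.1], by linarith⟩
  have := le_coe_of_tendsto_of_lt hmono hu hua hγ hs (hlim _ hs) (by linarith)
  exact absurd (top_le_iff.1 this) (EReal.coe_ne_top _)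

theorem mem_tildeGraph_of_tendsto (hc : ContinuousOn φ (Icc 0 1))
    (hmono : ∀ n, MonotoneOn (f n) (Icc 0 1))
    (hlim : ∀ s ∈ Ioo 0 1, Tendsto (f · s) atTop (𝓝 (φ s)))
    (hu : ∀ n, u n ∈ Icc 0 1) (hua : Tendsto u atTop (𝓝 a)) {g : ℝ}
    (hg : Tendsto (fun n => (f n (u n) : EReal)) atTop (𝓝 g)) : g ∈ tildeGraph φ a :=
  mem_tildeGraph_of_forall_lt_le hc (isClosed_Icc.mem_of_tendsto hua (.of_forall hu))
    (fun s hs hsa => EReal.coe_le_coe_iff.1 <|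
      coe_le_of_tendsto_of_lt hmono hu hua hg hs (hlim s hs) hsa)
    (fun s hs has => EReal.coe_le_coe_iff.1 <|
      le_coe_of_tendsto_of_lt hmono hu hua hg hs (hlim s hs) has)

end LimitValue

theorem limit_transmission_condition_general (π₁ π₂ : ℝ → ℝ) (π₁n π₂n : ℕ → ℝ → ℝ)
    (h1c : ContinuousOn π₁ (Set.Icc 0 1))
    (h2c : ContinuousOn π₂ (Set.Icc 0 1))
    (hnm : ∀ n, StrictMonoOn (π₁n n) (Set.Icc 0 1) ∧ StrictMonoOn (π₂n n) (Set.Icc 0 1))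
    (hucomp1 : ∀ K ⊆ Set.Ioo (0:ℝ) 1, IsCompact K →
      TendstoUniformlyOn (fun n => π₁n n) π₁ atTop K)
    (hucomp2 : ∀ K ⊆ Set.Ioo (0:ℝ) 1, IsCompact K →
      TendstoUniformlyOn (fun n => π₂n n) π₂ atTop K)
    (u₁n u₂n : ℕ → ℝ) (u₁ u₂ : ℝ)
    (hu₁n : ∀ n, u₁n n ∈ Set.Icc (0:ℝ) 1) (hu₂n : ∀ n, u₂n n ∈ Set.Icc (0:ℝ) 1)
    (heq : ∀ n, π₁n n (u₁n n) = π₂n n (u₂n n))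
    (hconv1 : Tendsto u₁n atTop (𝓝 u₁)) (hconv2 : Tendsto u₂n atTop (𝓝 u₂))
    (γ : EReal) (hγ : Tendsto (fun n => ((π₁n n (u₁n n) : ℝ) : EReal)) atTop (𝓝 γ)) :
    (tildeGraph π₁ u₁ ∩ tildeGraph π₂ u₂).Nonempty := by
  have hmono1 n := (hnm n).1.monotoneOn
  have hmono2 n := (hnm n).2.monotoneOn
  have hlim1 s (hs : s ∈ Ioo 0 1) := tendsto_apply_of_forall_isCompact hucomp1 hs
  have hlim2 s (hs : s ∈ Ioo 0 1) := tendsto_apply_of_forall_isCompact hucomp2 hs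
  have hγ₂ : Tendsto (fun n => (π₂n n (u₂n n) : EReal)) atTop (𝓝 γ) := by
    simpa only [heq] using hγ
  induction γ with
  | bot =>
    rw [eq_zero_of_tendsto_bot hmono1 hlim1 hu₁n hconv1 hγ,
      eq_zero_of_tendsto_bot hmono2 hlim2 hu₂n hconv2 hγ₂]
    exact ⟨min (π₁ 0) (π₂ 0), by simp [tildeGraph]⟩
  | top =>
    rw [eq_one_of_tendsto_top hmono1 hlim1 hu₁n hconv1 hγ,
      eq_one_of_tendsto_top hmono2 hlim2 hu₂n hconv2 hγ₂]
    exact ⟨max (π₁ 1) (π₂ 1), by simp [tildeGraph]⟩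
  | coe g =>
    exact ⟨g, mem_tildeGraph_of_tendsto h1c hmono1 hlim1 hu₁n hconv1 hγ,
      mem_tildeGraph_of_tendsto h2c hmono2 hlim2 hu₂n hconv2 hγ₂⟩

/-- Passage to the limit in the transmission condition: if the approximate capillary
pressures `π_{i,n}` satisfy `π_{1,n}(u_{1,n}) = π_{2,n}(u_{2,n})`, converge suitably
to `πᵢ`, and `u_{i,n} → uᵢ`, then `π̃₁(u₁) ∩ π̃₂(u₂) ≠ ∅`, provided the common values
`γₙ = π_{1,n}(u_{1,n})` converge in `ℝ̄`. -/
theorem limit_transmission_condition (π₁ π₂ : ℝ → ℝ) (π₁n π₂n : ℕ → ℝ → ℝ)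
    (h1c : ContinuousOn π₁ (Set.Icc 0 1)) (h1m : StrictMonoOn π₁ (Set.Icc 0 1))
    (h2c : ContinuousOn π₂ (Set.Icc 0 1)) (h2m : StrictMonoOn π₂ (Set.Icc 0 1))
    (hnc : ∀ n, ContinuousOn (π₁n n) (Set.Icc 0 1) ∧ ContinuousOn (π₂n n) (Set.Icc 0 1))
    (hnm : ∀ n, StrictMonoOn (π₁n n) (Set.Icc 0 1) ∧ StrictMonoOn (π₂n n) (Set.Icc 0 1))
    (hend0 : ∀ n, π₁n n 0 = π₂n n 0)
    (hend1 : ∀ n, π₁n n 1 = π₂n n 1)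
    (h0bot : Tendsto (fun n => π₁n n 0) atTop atBot)
    (h1top : Tendsto (fun n => π₁n n 1) atTop atTop)
    (hucomp1 : ∀ K ⊆ Set.Ioo (0:ℝ) 1, IsCompact K →
      TendstoUniformlyOn (fun n => π₁n n) π₁ atTop K)
    (hucomp2 : ∀ K ⊆ Set.Ioo (0:ℝ) 1, IsCompact K →
      TendstoUniformlyOn (fun n => π₂n n) π₂ atTop K)
    (u₁n u₂n : ℕ → ℝ) (u₁ u₂ : ℝ)
    (hu₁n : ∀ n, u₁n n ∈ Set.Icc (0:ℝ) 1) (hu₂n : ∀ n, u₂n n ∈ Set.Icc (0:ℝ) 1)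
    (heq : ∀ n, π₁n n (u₁n n) = π₂n n (u₂n n))
    (hu₁ : u₁ ∈ Set.Icc (0:ℝ) 1) (hu₂ : u₂ ∈ Set.Icc (0:ℝ) 1)
    (hconv1 : Tendsto u₁n atTop (𝓝 u₁)) (hconv2 : Tendsto u₂n atTop (𝓝 u₂))
    (γ : EReal) (hγ : Tendsto (fun n => ((π₁n n (u₁n n) : ℝ) : EReal)) atTop (𝓝 γ)) :
    (tildeGraph π₁ u₁ ∩ tildeGraph π₂ u₂).Nonempty :=
  limit_transmission_condition_general π₁ π₂ π₁n π₂n h1c h2c hnm hucomp1 hucomp2 u₁n u₂n u₁ u₂ hu₁n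
    hu₂n heq hconv1 hconv2 γ hγ
end
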